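/- arXiv:2205.15186 — 5 statements merged into one kernel-verified Lean document; each statement's English description precedes it below -/
import Mathlib

section
/- For n ≥ 0 define Z_n := (1/n!) · Σ_{σ ∈ S_n} 2^{-c(σ)} (so Z_0 = 1). Then for every n ≥ 1: Z_n = (1/n) · ( Z_{n−1} + (1/2) · Σ_{ℓ=2}^{n} Z_{n−ℓ} ). -/
open scoped BigOperators

/-- `Z_n = (1/n!) · Σ_{σ ∈ S_n} 2^{-c(σ)}`, where `c(σ)` is the number of cycles of `σ`
of length greater than one (the cardinality of the cycle type of `σ`). -/
noncomputable def Zseq (n : ℕ) : ℝ :=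
  (Nat.factorial n : ℝ)⁻¹ *
    ∑ σ : Equiv.Perm (Fin n), ((2 : ℝ) ^ σ.cycleType.card)⁻¹

section ZseqAux

open Equiv Equiv.Perm Finset


variable {β : Type*} [DecidableEq β] [Fintype β]

lemma support_swap_mul_of_fixed {f : Perm β} {a b : β} (ha : f a = a) (hb : f b ≠ b) :
    (Equiv.swap a b * f).support = insert a f.support := by
  have hab : a ≠ b := fun h => hb (by rw [← h, ha, h])
  have hfb_ne_a : f b ≠ a := fun h => hab (f.injective (by rw [ha, h])).symm
  ext y
  simp only [Equiv.Perm.mem_support, Finset.mem_insert, Equiv.Perm.mul_apply]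
  rcases eq_or_ne y a with rfl | hya
  · simp [ha, Equiv.swap_apply_left, hab.symm, hab]
  · rcases eq_or_ne y b with rfl | hyb
    · rw [Equiv.swap_apply_of_ne_of_ne hfb_ne_a hb]
      simp [hb, hya]
    · rcases eq_or_ne (f y) y with hfy | hfy
      · rw [hfy, Equiv.swap_apply_of_ne_of_ne hya hyb]
        simp [hya]
      · constructor
        · intro _; exact Or.inr hfy
        · intro _
          intro hcon
          rcases eq_or_ne (f y) a with h1 | h1
          · rw [h1, Equiv.swap_apply_left] at hcon; exact hyb hcon.symm
          · rcases eq_or_ne (f y) b with h2 | h2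
            · rw [h2, Equiv.swap_apply_right] at hcon; exact hya hcon.symm
            · rw [Equiv.swap_apply_of_ne_of_ne h1 h2] at hcon; exact hfy hcon

lemma isCycle_swap_mul_of_fixed {f : Perm β} (hf : f.IsCycle) {a b : β} (ha : f a = a)
    (hb : f b ≠ b) : (Equiv.swap a b * f).IsCycle := by
  have hab : a ≠ b := fun h => hb (by rw [← h, ha, h])
  set g := Equiv.swap a b * f with hg
  have hga : g a = b := by rw [hg, Equiv.Perm.mul_apply, ha, Equiv.swap_apply_left]
  -- key: ∀ j, ∃ i, (g ^ i) b = (f ^ j) b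
  have key : ∀ j : ℕ, ∃ i : ℕ, (g ^ i) b = (f ^ j) b := by
    intro j
    induction j with
    | zero => exact ⟨0, rfl⟩
    | succ j ih =>
      obtain ⟨i, hi⟩ := ih
      set z := (f ^ j) b with hz
      have hzsupp : z ∈ f.support := by
        rw [hz]
        exact (f.pow_apply_mem_support).2 (Equiv.Perm.mem_support.2 hb)
      have hza : f z ≠ a := fun h => by
        have : z = a := f.injective (by rw [ha, h])
        rw [this] at hzsupp
        exact (Equiv.Perm.mem_support.1 hzsupp) ha
      have hrhs : (f ^ (j + 1)) b = f z := by rw [pow_succ', Equiv.Perm.mul_apply, ← hz]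
      rcases eq_or_ne (f z) b with h2 | h2
      · refine ⟨i + 2, ?_⟩
        have hgz : g z = a := by rw [hg, Equiv.Perm.mul_apply, h2, Equiv.swap_apply_right]
        rw [hrhs, h2]
        simp only [show i + 2 = (i + 1) + 1 from rfl, pow_succ', Equiv.Perm.mul_apply]
        rw [hi, hgz, hga]
      · refine ⟨i + 1, ?_⟩
        rw [hrhs]
        simp only [pow_succ', Equiv.Perm.mul_apply]
        rw [hi, hg, Equiv.Perm.mul_apply, Equiv.swap_apply_of_ne_of_ne hza h2]
  refine ⟨a, by rw [hga]; exact hab.symm, ?_⟩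
  intro y hy
  have hy' : y = a ∨ f y ≠ y := by
    have : y ∈ g.support := Equiv.Perm.mem_support.2 hy
    rw [hg, support_swap_mul_of_fixed ha hb, Finset.mem_insert] at this
    exact this.imp id Equiv.Perm.mem_support.1
  rcases hy' with rfl | hy'
  · exact Equiv.Perm.SameCycle.refl _ _
  · have hsc : f.SameCycle b y := hf.sameCycle hb hy'
    obtain ⟨j, _, hj⟩ := hsc.exists_pow_eq'
    obtain ⟨i, hi⟩ := key j
    have h1 : g.SameCycle a b := ⟨1, by simpa using hga⟩
    exact h1.trans ⟨i, by rw [← hj]; exact_mod_cast hi⟩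

lemma card_cycleType_swap_mul_of_not_fixed {σ : Perm β} {a b : β} (ha : σ a = a)
    (hb : σ b ≠ b) :
    Multiset.card (Equiv.swap a b * σ).cycleType = Multiset.card σ.cycleType := by
  classical
  set c := σ.cycleOf b with hc
  have hc_mem : c ∈ σ.cycleFactorsFinset :=
    Equiv.Perm.cycleOf_mem_cycleFactorsFinset_iff.mpr (Equiv.Perm.mem_support.mpr hb)
  have hdc : (σ * c⁻¹).Disjoint c := Equiv.Perm.disjoint_mul_inv_of_mem_cycleFactorsFinset hc_mem
  set d := σ * c⁻¹ with hd
  have hσ : σ = c * d := by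
    rw [hd, ← hdc.commute.eq, inv_mul_cancel_right]
  have hcb : c b = σ b := σ.cycleOf_apply_self b
  have hca : c a = a := by
    rw [hc, Equiv.Perm.cycleOf_apply]; split <;> simp [ha]
  have hcyc : c.IsCycle := Equiv.Perm.isCycle_cycleOf σ hb
  have hcbne : c b ≠ b := by rw [hcb]; exact hb
  have hda : d a = a := by
    have : c⁻¹ a = a := by rw [Equiv.Perm.inv_eq_iff_eq, hca]
    rw [hd, Equiv.Perm.mul_apply, this, ha]
  have hdb : d b = b := by
    rcases hdc b with h | h
    · exact h
    · exact absurd h hcbne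
  have hkey : Equiv.swap a b * σ = (Equiv.swap a b * c) * d := by rw [hσ, mul_assoc]
  have hins : (Equiv.swap a b * c).IsCycle := isCycle_swap_mul_of_fixed hcyc hca hcbne
  have hsup : (Equiv.swap a b * c).support = insert a c.support :=
    support_swap_mul_of_fixed hca hcbne
  have hdisj : (Equiv.swap a b * c).Disjoint d := by
    rw [Equiv.Perm.disjoint_iff_disjoint_support, hsup, Finset.disjoint_insert_left]
    refine ⟨fun h => (Equiv.Perm.mem_support.1 h) hda, ?_⟩
    exact (Equiv.Perm.disjoint_iff_disjoint_support.1 hdc.symm)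
  have h1 : (Equiv.swap a b * σ).cycleType =
      (Equiv.swap a b * c).cycleType + d.cycleType := by
    rw [hkey, hdisj.cycleType_mul]
  have h2 : σ.cycleType = c.cycleType + d.cycleType := by
    rw [hσ, (hdc.symm).cycleType_mul]
  rw [h1, h2, Multiset.card_add, Multiset.card_add, hins.cycleType, hcyc.cycleType]
  simp

lemma card_cycleType_swap_mul_of_fixed {σ : Perm β} {a b : β} (hab : a ≠ b) (ha : σ a = a)
    (hb : σ b = b) :
    Multiset.card (Equiv.swap a b * σ).cycleType = Multiset.card σ.cycleType + 1 := by
  have hd : (Equiv.swap a b).Disjoint σ := by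
    intro x
    rcases eq_or_ne x a with rfl | hxa
    · exact Or.inr ha
    · rcases eq_or_ne x b with rfl | hxb
      · exact Or.inr hb
      · exact Or.inl (Equiv.swap_apply_of_ne_of_ne hxa hxb)
  rw [hd.cycleType_mul, Multiset.card_add, (Equiv.Perm.isCycle_swap hab).cycleType]
  simp [add_comm]

lemma cycleType_permCongr {γ : Type*} [DecidableEq γ] [Fintype γ] (f : β ≃ γ) (σ : Perm β) :
    (f.permCongr σ).cycleType = σ.cycleType := by
  classical
  have h : f.permCongr σ = σ.extendDomain (f.trans (Equiv.Set.univ γ).symm) := by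
    ext x
    rw [Equiv.Perm.extendDomain_apply_subtype _ _ (Set.mem_univ x)]
    simp [Equiv.Set.univ]
  rw [h, Equiv.Perm.cycleType_extendDomain]

variable {α : Type*} [DecidableEq α] [Fintype α]

lemma cycleType_optionCongr (e : Perm α) :
    Equiv.Perm.cycleType (Equiv.optionCongr e : Perm (Option α)) = e.cycleType := by
  classical
  have h : (Equiv.optionCongr e : Perm (Option α))
      = e.extendDomain (Equiv.optionIsSomeEquiv α).symm := by
    apply Equiv.ext
    intro x
    cases x with
    | none =>
        rw [Equiv.Perm.extendDomain_apply_not_subtype e ((Equiv.optionIsSomeEquiv α).symm)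
          (b := none) (by simp)]
        simp
    | some a =>
        rw [Equiv.Perm.extendDomain_apply_subtype e ((Equiv.optionIsSomeEquiv α).symm)
          (b := some a) (by simp)]
        simp [Equiv.optionIsSomeEquiv]
  rw [h, Equiv.Perm.cycleType_extendDomain]

lemma decomposeFin_symm_eq {n : ℕ} (p : Fin (n + 1)) (e : Perm (Fin n)) :
    Equiv.Perm.decomposeFin.symm (p, e) =
      ((finSuccEquiv n).symm.permCongr) (Equiv.Perm.decomposeOption.symm (finSuccEquiv n p, e)) :=
  rfl

lemma cycleType_decomposeFin_zero {n : ℕ} (e : Perm (Fin n)) :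
    (Equiv.Perm.decomposeFin.symm ((0 : Fin (n + 1)), e)).cycleType = e.cycleType := by
  rw [decomposeFin_symm_eq, cycleType_permCongr, finSuccEquiv_zero]
  have h : Equiv.Perm.decomposeOption.symm ((none : Option (Fin n)), e)
      = (Equiv.optionCongr e : Perm (Option (Fin n))) := by
    rw [Equiv.Perm.decomposeOption_symm_apply]
    simp [Equiv.swap_self, ← Equiv.Perm.one_def]
  rw [h, cycleType_optionCongr]

lemma card_cycleType_decomposeFin_succ {n : ℕ} (q : Fin n) (e : Perm (Fin n)) :
    Multiset.card (Equiv.Perm.decomposeFin.symm (q.succ, e)).cycleType =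
      if e q = q then Multiset.card e.cycleType + 1 else Multiset.card e.cycleType := by
  rw [decomposeFin_symm_eq, cycleType_permCongr, finSuccEquiv_succ,
    Equiv.Perm.decomposeOption_symm_apply]
  have hnone : (Equiv.optionCongr e : Perm (Option (Fin n))) none = none := by simp
  by_cases h : e q = q
  · rw [if_pos h, card_cycleType_swap_mul_of_fixed (by simp) hnone (by simp [h]),
      cycleType_optionCongr]
  · rw [if_neg h, card_cycleType_swap_mul_of_not_fixed hnone (by simp [h]),
      cycleType_optionCongr]

noncomputable def Wt {β : Type*} [DecidableEq β] [Fintype β] (σ : Perm β) : ℝ :=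
  ((2 : ℝ) ^ Multiset.card σ.cycleType)⁻¹

noncomputable def Bsum (n : ℕ) : ℝ := ∑ σ : Perm (Fin n), Wt σ

lemma Bsum_zero : Bsum 0 = 1 := by
  have h : ∀ σ : Perm (Fin 0), Wt σ = 1 := fun σ => by
    have hσ : σ = 1 := Subsingleton.elim _ _
    simp [Wt, hσ]
  simp [Bsum, h, Finset.card_univ]

lemma Bsum_one : Bsum 1 = 1 := by
  have h : ∀ σ : Perm (Fin 1), Wt σ = 1 := fun σ => by
    have hσ : σ = 1 := Subsingleton.elim _ _
    simp [Wt, hσ]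
  simp [Bsum, h, Finset.card_univ]

lemma sum_fix (m : ℕ) :
    ∑ σ : Perm (Fin (m + 1)), (if σ 0 = 0 then Wt σ else 0) = Bsum m := by
  rw [← Equiv.sum_comp (Equiv.Perm.decomposeFin.symm)
    (fun σ : Perm (Fin (m + 1)) => if σ 0 = 0 then Wt σ else 0), Fintype.sum_prod_type]
  simp only [Equiv.Perm.decomposeFin_symm_apply_zero]
  rw [Finset.sum_eq_single (0 : Fin (m + 1))]
  · apply Finset.sum_congr rfl
    intro e _
    rw [if_pos rfl]
    simp only [Wt, cycleType_decomposeFin_zero]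
  · intro p _ hp; simp [hp]
  · intro h; exact absurd (Finset.mem_univ _) h

lemma sum_fix_conj {n : ℕ} (q q' : Fin n) :
    ∑ σ : Perm (Fin n), (if σ q = q then Wt σ else 0)
      = ∑ σ : Perm (Fin n), (if σ q' = q' then Wt σ else 0) := by
  set c := Equiv.swap q q' with hc
  apply Fintype.sum_bijective (fun σ : Perm (Fin n) => c * σ * c⁻¹)
    (((Equiv.mulLeft c).trans (Equiv.mulRight c⁻¹)).bijective)
  intro σ
  have h1 : (c * σ * c⁻¹) q' = q' ↔ σ q = q := by
    rw [Equiv.Perm.mul_apply, Equiv.Perm.mul_apply, hc, Equiv.swap_inv, Equiv.swap_apply_right]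
    exact ⟨fun h => (Equiv.swap q q').injective (h.trans (Equiv.swap_apply_left q q').symm),
      fun h => by rw [h, Equiv.swap_apply_left]⟩
  have h2 : Wt (c * σ * c⁻¹) = Wt σ := by
    simp only [Wt, Equiv.Perm.cycleType_conj]
  rw [h2]
  exact (if_congr h1 rfl rfl).symm

lemma Bsum_rec (m : ℕ) :
    Bsum (m + 2) = ((m : ℝ) + 2) * Bsum (m + 1) - (((m : ℝ) + 1) / 2) * Bsum m := by
  have expand : Bsum (m + 2) = ∑ p : Fin (m + 2), ∑ e : Perm (Fin (m + 1)),
      Wt (Equiv.Perm.decomposeFin.symm (p, e)) := by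
    rw [Bsum, ← Equiv.sum_comp (Equiv.Perm.decomposeFin.symm) Wt, Fintype.sum_prod_type]
  have h0 : ∑ e : Perm (Fin (m + 1)), Wt (Equiv.Perm.decomposeFin.symm ((0 : Fin (m + 2)), e))
      = Bsum (m + 1) := by
    apply Finset.sum_congr rfl
    intro e _
    simp only [Wt, cycleType_decomposeFin_zero]
  have h1 : ∀ q : Fin (m + 1), ∑ e : Perm (Fin (m + 1)),
      Wt (Equiv.Perm.decomposeFin.symm (q.succ, e)) = Bsum (m + 1) - (1 / 2) * Bsum m := by
    intro q
    have hterm : ∀ e : Perm (Fin (m + 1)), Wt (Equiv.Perm.decomposeFin.symm (q.succ, e))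
        = Wt e - (1 / 2) * (if e q = q then Wt e else 0) := by
      intro e
      by_cases h : e q = q
      · simp only [Wt, card_cycleType_decomposeFin_succ, if_pos h]
        have hx : (2 : ℝ) ^ Multiset.card e.cycleType ≠ 0 := by positivity
        rw [pow_succ]
        field_simp
        ring
      · simp [Wt, card_cycleType_decomposeFin_succ, if_neg h]
    rw [Finset.sum_congr rfl (fun e _ => hterm e), Finset.sum_sub_distrib, ← Finset.mul_sum,
      sum_fix_conj q 0, sum_fix m]
    rfl
  rw [expand, Fin.sum_univ_succ, h0, Finset.sum_congr rfl (fun q _ => h1 q),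
    Finset.sum_const, Finset.card_univ, Fintype.card_fin, nsmul_eq_mul]
  push_cast
  ring

lemma Zseq_eq_Bsum (n : ℕ) : Zseq n = (Nat.factorial n : ℝ)⁻¹ * Bsum n := rfl

lemma Zseq_zero : Zseq 0 = 1 := by
  rw [Zseq_eq_Bsum, Bsum_zero]; simp

lemma Zseq_one : Zseq 1 = 1 := by
  rw [Zseq_eq_Bsum, Bsum_one]; simp

lemma Zseq_three_term (k : ℕ) :
    ((k : ℝ) + 2) * Zseq (k + 2) = ((k : ℝ) + 2) * Zseq (k + 1) - (1 / 2) * Zseq k := by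
  have hf : (Nat.factorial k : ℝ) ≠ 0 := by
    exact_mod_cast (Nat.factorial_pos k).ne'
  have h1 : (Nat.factorial (k + 1) : ℝ) = ((k : ℝ) + 1) * Nat.factorial k := by
    rw [Nat.factorial_succ]; push_cast; ring
  have h2 : (Nat.factorial (k + 2) : ℝ) = ((k : ℝ) + 2) * (((k : ℝ) + 1) * Nat.factorial k) := by
    rw [Nat.factorial_succ, Nat.factorial_succ]; push_cast; ring
  have hk1 : ((k : ℝ) + 1) ≠ 0 := by positivity
  have hk2 : ((k : ℝ) + 2) ≠ 0 := by positivity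
  rw [Zseq_eq_Bsum, Zseq_eq_Bsum, Zseq_eq_Bsum, Bsum_rec, h1, h2]
  field_simp

lemma Icc_sum_eq (m : ℕ) :
    ∑ ℓ ∈ Finset.Icc 2 m, Zseq (m - ℓ) = ∑ j ∈ Finset.range (m - 1), Zseq j := by
  apply Finset.sum_nbij' (fun ℓ => m - ℓ) (fun j => m - j) <;>
    intro a ha <;>
    simp only [Finset.mem_Icc, Finset.mem_range] at * <;>
    omega


end ZseqAux

/-- for all `n ≥ 1`,
`Z_n = (1/n) · (Z_{n−1} + (1/2) · Σ_{ℓ=2}^{n} Z_{n−ℓ})`. -/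
theorem Zseq_recursion (n : ℕ) (hn : 1 ≤ n) :
    Zseq n = (n : ℝ)⁻¹ * (Zseq (n - 1) + (1 / 2) * ∑ ℓ ∈ Finset.Icc 2 n, Zseq (n - ℓ)) := by
  induction n, hn using Nat.le_induction with
  | base =>
    rw [Finset.Icc_eq_empty (by norm_num : ¬(2 : ℕ) ≤ 1)]
    simp [Zseq_zero, Zseq_one]
  | succ n hn ih =>
    obtain ⟨k, rfl⟩ : ∃ k, n = k + 1 := ⟨n - 1, by omega⟩
    show Zseq (k + 2) = ((k + 2 : ℕ) : ℝ)⁻¹ *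
      (Zseq (k + 1) + (1 / 2) * ∑ ℓ ∈ Finset.Icc 2 (k + 2), Zseq (k + 2 - ℓ))
    have hsum : ∑ ℓ ∈ Finset.Icc 2 (k + 2), Zseq (k + 2 - ℓ)
        = (∑ ℓ ∈ Finset.Icc 2 (k + 1), Zseq (k + 1 - ℓ)) + Zseq k := by
      rw [Icc_sum_eq (k + 2), Icc_sum_eq (k + 1)]
      rw [show (k + 2 - 1 : ℕ) = (k + 1 - 1) + 1 by omega, Finset.sum_range_succ]
      norm_num
    have hIH : ((k : ℝ) + 1) * Zseq (k + 1)
        = Zseq k + (1 / 2) * ∑ ℓ ∈ Finset.Icc 2 (k + 1), Zseq (k + 1 - ℓ) := by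
      have hk1 : ((k : ℝ) + 1) ≠ 0 := by positivity
      rw [show Zseq (k + 1) = (((k + 1 : ℕ)) : ℝ)⁻¹ *
        (Zseq k + (1 / 2) * ∑ ℓ ∈ Finset.Icc 2 (k + 1), Zseq (k + 1 - ℓ)) from ih]
      push_cast
      rw [mul_inv_cancel_left₀ hk1]
    have h3 := Zseq_three_term k
    have hk2 : ((k : ℝ) + 2) ≠ 0 := by positivity
    rw [hsum]
    push_cast
    rw [eq_comm, inv_mul_eq_iff_eq_mul₀ hk2]
    linear_combination -h3 - hIH
end

section
/- Let n ≥ 1 and let σ₁, σ₂ be permutations of [n]. Then the number of ordered pairs of permutations (τ₁, τ₂) of [n] such that for every i ∈ [n] the unordered pair (multiset) {τ₁(i), τ₂(i)} equals the unordered pair {σ₁(i), σ₂(i)} is exactly 2^{c(σ₁,σ₂)}. -/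
open scoped BigOperators

namespace Stmt13

open Equiv Equiv.Perm

lemma pair_eq_pair' {α : Type*} {a b c d : α}
    (h : ({a, b} : Multiset α) = {c, d}) : (a = c ∧ b = d) ∨ (a = d ∧ b = c) := by
  have h' : (a ::ₘ {b} : Multiset α) = c ::ₘ {d} := h
  rw [Multiset.cons_eq_cons] at h'
  rcases h' with ⟨rfl, h2⟩ | ⟨hne, cs, h1, h2⟩
  · exact Or.inl ⟨rfl, Multiset.singleton_inj.mp h2⟩
  · have h1' : b = c ∧ cs = 0 := (Multiset.singleton_eq_cons_iff cs).mp h1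
    rcases h1' with ⟨rfl, rfl⟩
    have h2' : d = a := ((Multiset.singleton_eq_cons_iff _).mp h2).1
    exact Or.inr ⟨h2'.symm, rfl⟩

lemma snd_eq {α : Type*} [DecidableEq α] {a b c d : α}
    (h : ({a, b} : Multiset α) = {c, d}) : b = if a = d then c else d := by
  rcases pair_eq_pair' h with ⟨rfl, rfl⟩ | ⟨rfl, rfl⟩
  · split <;> rename_i h' <;> simp_all
  · simp

lemma bij_ite {α : Type*} [Finite α] (π : Perm α) (p : α → Prop) [DecidablePred p]
    (hp : ∀ i, p i → p (π i)) :
    Function.Bijective (fun i => if p i then π i else i) := by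
  rw [Finite.injective_iff_bijective.symm]
  intro i j h
  dsimp only at h
  by_cases hi : p i <;> by_cases hj : p j <;> simp only [hi, hj, if_true, if_false,
    if_pos, if_neg, not_false_iff] at h
  · exact π.injective h
  · exact absurd (h ▸ hp i hi) hj
  · exact absurd (h ▸ hp j hj) hi
  · exact h

section Invariance

variable {α : Type*} [Fintype α] [DecidableEq α] (π τ : Perm α)

set_option linter.unusedSectionVars false

lemma fixed_forward (hτ : ∀ i, τ i = i ∨ τ i = π i) (x : α) (hx : τ x = x) :
    τ (π x) = π x := by
  by_cases hπ : π x = x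
  · rw [hπ, hx]
  rcases hτ (π x) with h | h
  · exact h
  by_cases h2 : π (π x) = π x
  · rw [h, h2]
  exfalso
  obtain ⟨j, hj⟩ := τ.surjective (π x)
  rcases hτ j with hj' | hj'
  · rw [hj'] at hj
    subst hj
    exact h2 (hj'.symm.trans h).symm
  · rw [hj'] at hj
    have := π.injective hj
    subst this
    rw [hx] at hj'
    exact hπ hj'.symm

lemma moved_forward (hτ : ∀ i, τ i = i ∨ τ i = π i) (x : α) (hx : τ x ≠ x) :
    τ (π x) ≠ π x := by
  intro h
  have h1 : τ x = π x := (hτ x).resolve_left hx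
  have h2 : π x = x := τ.injective (h.trans h1.symm)
  exact hx (h1.trans h2)

lemma moved_backward (hτ : ∀ i, τ i = i ∨ τ i = π i) (x : α) (hx : τ (π x) ≠ π x) :
    τ x ≠ x :=
  fun h => hx (fixed_forward π τ hτ x h)

lemma moved_zpow (hτ : ∀ i, τ i = i ∨ τ i = π i) (x : α) (hx : τ x ≠ x) :
    ∀ k : ℤ, τ ((π ^ k) x) ≠ (π ^ k) x := by
  intro k
  induction k using Int.induction_on with
  | zero => simpa using hx
  | succ i ih =>
    have e : (π ^ ((i : ℤ) + 1)) x = π ((π ^ (i : ℤ)) x) := by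
      rw [add_comm, zpow_add, zpow_one, mul_apply]
    rw [e]
    exact moved_forward π τ hτ _ ih
  | pred i ih =>
    have e : (π ^ (-(i : ℤ) - 1 + 1)) x = π ((π ^ (-(i : ℤ) - 1)) x) := by
      rw [add_comm, zpow_add, zpow_one, mul_apply]
    simp only [sub_add_cancel] at e
    exact moved_backward π τ hτ _ (e ▸ ih)

lemma moved_sameCycle (hτ : ∀ i, τ i = i ∨ τ i = π i) {x y : α} (hxy : π.SameCycle x y)
    (hx : τ x ≠ x) : τ y ≠ y := by
  obtain ⟨k, hk⟩ := hxy
  exact hk ▸ moved_zpow π τ hτ x hx k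

end Invariance

lemma card_U {α : Type*} [Fintype α] [DecidableEq α] (π : Perm α) :
    Nat.card {τ : Perm α // ∀ i, τ i = i ∨ τ i = π i} = 2 ^ π.cycleFactorsFinset.card := by
  classical
  have hsupp : ∀ c : π.cycleFactorsFinset, c.1.support.Nonempty := fun c =>
    Finset.nonempty_iff_ne_empty.mpr (by
      rw [Ne, Equiv.Perm.support_eq_empty_iff]
      exact (mem_cycleFactorsFinset_iff.mp c.2).1.ne_one)
  set pt : π.cycleFactorsFinset → α := fun c => (hsupp c).choose with hpt
  have hptmem : ∀ c, pt c ∈ c.1.support := fun c => (hsupp c).choose_spec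
  set F : {τ : Perm α // ∀ i, τ i = i ∨ τ i = π i} → (π.cycleFactorsFinset → Bool) :=
    fun τ c => decide (τ.1 (pt c) ≠ pt c) with hF
  have hbij : Function.Bijective F := by
    constructor
    · rintro ⟨τ, hτ⟩ ⟨τ', hτ'⟩ h
      ext i
      by_cases hi : π i = i
      · have h1 : τ i = i := by rcases hτ i with h' | h'; exact h'; rw [h', hi]
        have h2 : τ' i = i := by rcases hτ' i with h' | h'; exact h'; rw [h', hi]
        rw [h1, h2]
      · have hic : π.cycleOf i ∈ π.cycleFactorsFinset :=
          cycleOf_mem_cycleFactorsFinset_iff.mpr (mem_support.mpr hi)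
        set c : π.cycleFactorsFinset := ⟨π.cycleOf i, hic⟩ with hc
        have hsc : π.SameCycle i (pt c) :=
          ((mem_support_cycleOf_iff).mp (hptmem c)).1
        have hdec : (τ (pt c) ≠ pt c) ↔ (τ' (pt c) ≠ pt c) := by
          have := congrFun h c
          simp only [hF, decide_eq_decide] at this
          exact this
        have key : τ i = i ↔ τ' i = i := by
          rw [← not_iff_not]
          constructor
          · intro hx
            exact moved_sameCycle π τ' hτ' hsc.symm (hdec.mp (moved_sameCycle π τ hτ hsc hx))
          · intro hx
            exact moved_sameCycle π τ hτ hsc.symm (hdec.mpr (moved_sameCycle π τ' hτ' hsc hx))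
        by_cases ht : τ i = i
        · exact ht.trans (key.mp ht).symm
        · have h1 : τ i = π i := (hτ i).resolve_left ht
          have h2 : τ' i = π i := (hτ' i).resolve_left (fun hh => ht (key.mpr hh))
          exact h1.trans h2.symm
    · intro f
      set p : α → Prop := fun i => ∃ c : π.cycleFactorsFinset, f c = true ∧ i ∈ c.1.support
        with hpdef
      have hp : ∀ i, p i → p (π i) := by
        rintro i ⟨c, hfc, hic⟩
        refine ⟨c, hfc, ?_⟩
        rw [← (mem_cycleFactorsFinset_iff.mp c.2).2 i hic]
        exact apply_mem_support.mpr hic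
      set τf : Perm α := Equiv.ofBijective _ (bij_ite π p hp) with hτfdef
      have app : ∀ i, τf i = if p i then π i else i := fun i => rfl
      have hτf : ∀ i, τf i = i ∨ τf i = π i := by
        intro i
        rw [app]
        by_cases h : p i
        · right; rw [if_pos h]
        · left; rw [if_neg h]
      refine ⟨⟨τf, hτf⟩, ?_⟩
      funext c
      show decide (τf (pt c) ≠ pt c) = f c
      have hmem_iff : p (pt c) ↔ f c = true := by
        constructor
        · rintro ⟨c', hfc', hmem'⟩
          have : c' = c := Subtype.ext
            ((cycle_is_cycleOf hmem' c'.2).trans (cycle_is_cycleOf (hptmem c) c.2).symm)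
          exact this ▸ hfc'
        · exact fun h => ⟨c, h, hptmem c⟩
      by_cases hfc : f c = true
      · have hp' : p (pt c) := hmem_iff.mpr hfc
        have hne : π (pt c) ≠ pt c := by
          rw [← (mem_cycleFactorsFinset_iff.mp c.2).2 _ (hptmem c)]
          exact mem_support.mp (hptmem c)
        rw [app, if_pos hp', hfc]
        simp [hne]
      · have hnp : ¬ p (pt c) := fun hp' => hfc (hmem_iff.mp hp')
        rw [app, if_neg hnp]
        rw [Bool.not_eq_true] at hfc
        rw [hfc]
        simp
  rw [Nat.card_eq_of_bijective F hbij, Nat.card_eq_fintype_card]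
  simp [Fintype.card_fun]

lemma cycleType_card_eq {α : Type*} [Fintype α] [DecidableEq α] (π : Perm α) :
    Multiset.card π.cycleType = π.cycleFactorsFinset.card := by
  rw [Equiv.Perm.cycleType_def, Multiset.card_map, Finset.card_def]

end Stmt13

/-- for `n ≥ 1` and permutations `σ₁, σ₂` of `[n]`, the number of ordered
pairs of permutations `(τ₁, τ₂)` such that for every `i` the unordered pair (multiset)
`{τ₁ i, τ₂ i}` equals `{σ₁ i, σ₂ i}` is exactly `2^{c(σ₁,σ₂)}`, where `c(σ₁,σ₂)` is the
number of cycles of length greater than one of `σ₁ ∘ σ₂⁻¹`. -/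
theorem card_pairs_same_unordered_values (n : ℕ) (hn : 1 ≤ n)
    (σ₁ σ₂ : Equiv.Perm (Fin n)) :
    Nat.card {τ : Equiv.Perm (Fin n) × Equiv.Perm (Fin n) //
        ∀ i, ({τ.1 i, τ.2 i} : Multiset (Fin n)) = ({σ₁ i, σ₂ i} : Multiset (Fin n))}
      = 2 ^ (σ₁ * σ₂⁻¹).cycleType.card := by
  classical
  open Equiv Equiv.Perm Stmt13 in
  set π : Equiv.Perm (Fin n) := σ₁ * σ₂⁻¹ with hπ
  clear_value π
  have hπapp : ∀ i, π (σ₂ i) = σ₁ i := by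
    intro i
    simp [hπ, Equiv.Perm.mul_apply]
  set G : {τ : Equiv.Perm (Fin n) × Equiv.Perm (Fin n) //
        ∀ i, ({τ.1 i, τ.2 i} : Multiset (Fin n)) = ({σ₁ i, σ₂ i} : Multiset (Fin n))} →
      {τ : Equiv.Perm (Fin n) // ∀ i, τ i = i ∨ τ i = π i} := fun t =>
    ⟨t.1.1 * σ₂⁻¹, by
      intro i
      have h := t.2 (σ₂⁻¹ i)
      rcases pair_eq_pair' h with ⟨h1, _⟩ | ⟨h1, _⟩
      · right
        simp only [Equiv.Perm.mul_apply]
        rw [h1, hπ]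
        rfl
      · left
        simp only [Equiv.Perm.mul_apply]
        rw [h1]; exact Equiv.apply_symm_apply σ₂ i⟩ with hG
  have hbij : Function.Bijective G := by
    constructor
    · rintro ⟨⟨τ₁, τ₂⟩, ht⟩ ⟨⟨τ₁', τ₂'⟩, ht'⟩ h
      simp only [hG, Subtype.mk.injEq] at h
      have h1 : τ₁ = τ₁' := mul_right_cancel h
      refine Subtype.ext (Prod.ext h1 ?_)
      ext i
      have e1 := snd_eq (ht i)
      have e2 := snd_eq (ht' i)
      rw [e1, e2, h1]
    · rintro ⟨ρ, hρ⟩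
      have hp : ∀ x, ρ x = x → ρ (π x) = π x := fixed_forward π ρ hρ
      set ρ' : Equiv.Perm (Fin n) :=
        Equiv.ofBijective _ (bij_ite π (fun x => ρ x = x) hp) with hρ'def
      have app : ∀ x, ρ' x = if ρ x = x then π x else x := fun x => rfl
      refine ⟨⟨(ρ * σ₂, ρ' * σ₂), ?_⟩, ?_⟩
      · intro i
        show ({ρ (σ₂ i), ρ' (σ₂ i)} : Multiset (Fin n)) = {σ₁ i, σ₂ i}
        by_cases h : ρ (σ₂ i) = σ₂ i
        · rw [h, app, if_pos h, hπapp]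
          exact Multiset.pair_comm _ _
        · rw [(hρ (σ₂ i)).resolve_left h, app, if_neg h, hπapp]
      · apply Subtype.ext
        show ρ * σ₂ * σ₂⁻¹ = ρ
        group
  have step1 := Nat.card_eq_of_bijective G hbij
  rw [step1]
  rw [card_U π]
  rw [Stmt13.cycleType_card_eq π]
end

section
/- Let n ≥ 1 and let μ₂, ν be real numbers. Then Σ_{σ ∈ S_n} μ₂^{fix(σ)} · ν^{n − fix(σ)} = n! · Σ_{ℓ=0}^{n} (μ₂ − ν)^ℓ · ν^{n−ℓ} / ℓ!. -/
open scoped BigOperators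

/-- `fixCount σ` is the number of fixed points of the permutation `σ`. -/
def fixCount {n : ℕ} (σ : Equiv.Perm (Fin n)) : ℕ :=
  (Finset.univ.filter fun i => σ i = i).card

open Finset in
/-- Counting lemma: the number of permutations of `Fin n` fixing every point of `S`
is `(n - |S|)!`. -/
lemma card_fixing {n : ℕ} (S : Finset (Fin n)) :
    (Finset.univ.filter fun σ : Equiv.Perm (Fin n) => ∀ i ∈ S, σ i = i).card
      = Nat.factorial (n - S.card) := by
  have e : Equiv.Perm {a : Fin n // a ∉ S} ≃ {σ : Equiv.Perm (Fin n) // ∀ i ∈ S, σ i = i} := by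
    refine (Equiv.Perm.subtypeEquivSubtypePerm (fun a => a ∉ S)).trans (Equiv.subtypeEquivRight ?_)
    intro f
    constructor
    · intro h i hi; exact h i (by simpa using hi)
    · intro h a ha; exact h a (by simpa using ha)
  have := Fintype.card_congr e
  rw [Fintype.card_perm] at this
  rw [← Fintype.card_subtype, ← this]
  congr 1
  rw [Fintype.card_subtype, filter_not, card_sdiff_of_subset (filter_subset _ _), card_univ,
    Fintype.card_fin]
  congr 1
  rw [filter_mem_eq_inter, univ_inter]

/-- for `n ≥ 1` and reals `μ₂, ν`:
`Σ_{σ ∈ S_n} μ₂^{fix(σ)} · ν^{n−fix(σ)} = n! · Σ_{ℓ=0}^{n} (μ₂−ν)^ℓ · ν^{n−ℓ} / ℓ!`. -/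
theorem sum_fix_weight_eq (n : ℕ) (hn : 1 ≤ n) (μ₂ ν : ℝ) :
    ∑ σ : Equiv.Perm (Fin n), μ₂ ^ fixCount σ * ν ^ (n - fixCount σ)
      = (Nat.factorial n : ℝ) *
          ∑ ℓ ∈ Finset.range (n + 1),
            (μ₂ - ν) ^ ℓ * ν ^ (n - ℓ) / (Nat.factorial ℓ : ℝ) := by
  classical
  open Finset in
  set F : Equiv.Perm (Fin n) → Finset (Fin n) :=
    fun σ => Finset.univ.filter fun i => σ i = i with hF
  have hfix : ∀ σ : Equiv.Perm (Fin n), fixCount σ = (F σ).card := fun _ => rfl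
  set w : Finset (Fin n) → ℝ := fun S => (μ₂ - ν) ^ S.card * ν ^ (n - S.card) with hw
  -- step A: each term expands over powerset of F σ
  have stepA : ∀ σ : Equiv.Perm (Fin n),
      μ₂ ^ fixCount σ * ν ^ (n - fixCount σ) = ∑ S ∈ (F σ).powerset, w S := by
    intro σ
    have hcle : (F σ).card ≤ n := by
      simpa using card_filter_le (Finset.univ : Finset (Fin n)) _
    have h1 : μ₂ ^ fixCount σ = ∑ S ∈ (F σ).powerset,
        (μ₂ - ν) ^ S.card * ν ^ ((F σ).card - S.card) := by
      have : μ₂ ^ fixCount σ = ∏ _i ∈ F σ, ((μ₂ - ν) + ν) := by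
        rw [prod_const, hfix]; ring_nf
      rw [this, prod_add]
      refine Finset.sum_congr rfl fun S hS => ?_
      rw [prod_const, prod_const, card_sdiff_of_subset (mem_powerset.1 hS)]
    rw [h1, sum_mul]
    refine Finset.sum_congr rfl fun S hS => ?_
    have hSle : S.card ≤ (F σ).card := card_le_card (mem_powerset.1 hS)
    rw [hw, mul_assoc, ← pow_add]
    congr 2
    rw [hfix]
    omega
  simp_rw [stepA]
  -- step B: swap sums and count permutations fixing each S
  have hpow : ∀ σ : Equiv.Perm (Fin n),
      (F σ).powerset = (Finset.univ : Finset (Fin n)).powerset.filter (· ⊆ F σ) := by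
    intro σ; ext S; simp
  have stepB : (∑ σ : Equiv.Perm (Fin n), ∑ S ∈ (F σ).powerset, w S)
      = ∑ S ∈ (Finset.univ : Finset (Fin n)).powerset,
          (Nat.factorial (n - S.card) : ℝ) * w S := by
    simp_rw [hpow, sum_filter]
    rw [Finset.sum_comm]
    refine Finset.sum_congr rfl fun S _ => ?_
    have : ∀ σ : Equiv.Perm (Fin n), (S ⊆ F σ) ↔ ∀ i ∈ S, σ i = i := by
      intro σ
      constructor
      · intro h i hi; have := h hi; simp [hF] at this; exact this
      · intro h i hi; simp [hF, h i hi]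
    simp_rw [this]
    rw [← sum_filter, sum_const, card_fixing, nsmul_eq_mul]
  rw [stepB]
  -- step C: group by cardinality
  rw [Finset.sum_powerset]
  rw [card_univ, Fintype.card_fin]
  rw [Finset.mul_sum]
  refine Finset.sum_congr rfl fun ℓ hℓ => ?_
  have hℓn : ℓ ≤ n := by simpa using Nat.lt_succ_iff.1 (mem_range.1 hℓ)
  have : ∀ S ∈ Finset.powersetCard ℓ (Finset.univ : Finset (Fin n)),
      (Nat.factorial (n - S.card) : ℝ) * w S
        = (Nat.factorial (n - ℓ) : ℝ) * ((μ₂ - ν) ^ ℓ * ν ^ (n - ℓ)) := by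
    intro S hS
    rw [hw]; simp only [(mem_powersetCard.1 hS).2]
  rw [Finset.sum_congr rfl this, sum_const, card_powersetCard, card_univ, Fintype.card_fin,
    nsmul_eq_mul]
  have key : (n.choose ℓ : ℝ) * (Nat.factorial (n - ℓ) : ℝ) * (Nat.factorial ℓ : ℝ)
      = (Nat.factorial n : ℝ) := by
    rw [← Nat.cast_mul, ← Nat.cast_mul]
    congr 1
    rw [mul_right_comm]
    exact Nat.choose_mul_factorial_mul_factorial hℓn
  have hfact : (Nat.factorial ℓ : ℝ) ≠ 0 := Nat.cast_ne_zero.2 (Nat.factorial_ne_zero ℓ)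
  field_simp
  rw [← key]
  ring
end

section
/- Let n ≥ 1 and let μ₂ be a real number and ν > 0 a real number. Then Σ_{σ ∈ S_n} μ₂^{fix(σ)} · ν^{n − fix(σ)} · 2^{-c(σ)} = n! · ν^n · Σ_{ℓ=0}^{n} ( (μ₂/ν − 1/2)^ℓ / ℓ! ) · (2(n−ℓ))! / ( 4^{n−ℓ} · ((n−ℓ)!)² ). -/
open scoped BigOperators

open Equiv Equiv.Perm Finset List

theorem merge_cycle {α : Type*} [Fintype α] [DecidableEq α] {C : Perm α} {a b : α} (hC : C.IsCycle)
    (ha : a ∉ C.support) (hb : b ∈ C.support) :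
    (swap a b * C).IsCycle ∧ (swap a b * C).support = insert a C.support := by
  have hCb : C.cycleOf b = C := hC.cycleOf_eq (mem_support.mp hb)
  have hform : C = (C.toList b).formPerm := by rw [formPerm_toList, hCb]
  obtain ⟨t, ht⟩ : ∃ t, C.toList b = b :: t := by
    cases h : C.toList b with
    | nil =>
      exact absurd (length_toList_pos_of_mem_support _ _ hb) (by simp [h])
    | cons hd t =>
      refine ⟨t, ?_⟩
      have h0 := toList_getElem_zero (p := C) (x := b) hb
      have h1 := List.get_of_eq h ⟨0, length_toList_pos_of_mem_support _ _ hb⟩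
      have h2 : hd = b := by simpa [h] using h0
      rw [h2]
  have hnodup : (b :: t).Nodup := ht ▸ nodup_toList C b
  have hafin : a ∉ (b :: t) := by
    intro hmem
    rw [← ht, mem_toList_iff] at hmem
    exact ha (hmem.1.mem_support_iff.mp hb)
  have hnodup2 : (a :: b :: t).Nodup := List.nodup_cons.mpr ⟨hafin, hnodup⟩
  have heq : swap a b * C = (a :: b :: t).formPerm := by
    rw [hform, ht, formPerm_cons_cons]
  have hlen2 : 2 ≤ (a :: b :: t).length := by simp
  have hsuppC : C.support = (b :: t).toFinset := by
    rw [hform, ht]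
    refine support_formPerm_of_nodup _ hnodup ?_
    intro x hx
    exact (toList_ne_singleton (p := C) (x := b) x) (ht.trans hx)
  constructor
  · rw [heq]; exact isCycle_formPerm hnodup2 hlen2
  · rw [heq, support_formPerm_of_nodup _ hnodup2 (by intro x; simp), hsuppC]
    simp

theorem hat_apply_succ {n : ℕ} (τ : Perm (Fin n)) (i : Fin n) :
    Equiv.Perm.decomposeFin.symm ((0 : Fin (n+1)), τ) i.succ = (τ i).succ := by
  rw [Equiv.Perm.decomposeFin_symm_apply_succ, Equiv.swap_self]; rfl

theorem decomp_eq {n : ℕ} (p : Fin (n+1)) (τ : Perm (Fin n)) :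
    Equiv.Perm.decomposeFin.symm (p, τ)
      = swap 0 p * Equiv.Perm.decomposeFin.symm ((0 : Fin (n+1)), τ) := by
  ext x
  refine Fin.cases ?_ (fun i => ?_) x
  · simp [Equiv.Perm.decomposeFin_symm_apply_zero]
  · simp [Equiv.Perm.decomposeFin_symm_apply_succ, hat_apply_succ]

def finSuccEquivNeZero (n : ℕ) : Fin n ≃ {x : Fin (n+1) // x ≠ 0} where
  toFun i := ⟨i.succ, i.succ_ne_zero⟩
  invFun x := x.1.pred x.2
  left_inv i := by simp
  right_inv x := by simp

theorem cycleType_hat {n : ℕ} (τ : Perm (Fin n)) :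
    (Equiv.Perm.decomposeFin.symm ((0 : Fin (n+1)), τ)).cycleType = τ.cycleType := by
  have : Equiv.Perm.decomposeFin.symm ((0 : Fin (n+1)), τ)
      = τ.extendDomain (finSuccEquivNeZero n) := by
    ext x
    refine Fin.cases ?_ (fun i => ?_) x
    · rw [Equiv.Perm.decomposeFin_symm_apply_zero,
        Equiv.Perm.extendDomain_apply_not_subtype _ _ (by simp)]
    · have h2 := Equiv.Perm.extendDomain_apply_subtype τ (finSuccEquivNeZero n)
        (b := i.succ) i.succ_ne_zero
      rw [hat_apply_succ, h2]
      simp [finSuccEquivNeZero, Fin.pred_succ]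
  rw [this, Equiv.Perm.cycleType_extendDomain]

theorem cycleType_swap' {α : Type*} [Fintype α] [DecidableEq α] {a b : α} (h : a ≠ b) :
    (swap a b).cycleType = {2} := by
  rw [(isCycle_swap h).cycleType, support_swap h]
  rw [Finset.card_insert_of_notMem (by simpa using h), Finset.card_singleton]

theorem case1 {n : ℕ} (τ : Perm (Fin n)) :
    (Equiv.Perm.decomposeFin.symm ((0 : Fin (n+1)), τ)).cycleType = τ.cycleType :=
  cycleType_hat τ

theorem case2 {n : ℕ} (τ : Perm (Fin n)) (j : Fin n) (hj : τ j = j) :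
    (Equiv.Perm.decomposeFin.symm (j.succ, τ)).cycleType = 2 ::ₘ τ.cycleType := by
  set τh := Equiv.Perm.decomposeFin.symm ((0 : Fin (n+1)), τ) with hτh
  have hd : Equiv.Perm.Disjoint (swap (0 : Fin (n+1)) j.succ) τh := by
    intro x
    refine Fin.cases ?_ (fun i => ?_) x
    · right; exact Equiv.Perm.decomposeFin_symm_apply_zero _ _
    · by_cases hij : i = j
      · subst hij; right; rw [hat_apply_succ, hj]
      · left
        exact swap_apply_of_ne_of_ne (Fin.succ_ne_zero i) (by simpa using hij)
  rw [decomp_eq, ← hτh, hd.cycleType_mul, cycleType_swap' (Fin.succ_ne_zero j).symm,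
    cycleType_hat]
  rfl

theorem case3 {n : ℕ} (τ : Perm (Fin n)) (j : Fin n) (hj : τ j ≠ j) :
    Multiset.card (Equiv.Perm.decomposeFin.symm (j.succ, τ)).cycleType
        = Multiset.card τ.cycleType ∧
      (Equiv.Perm.decomposeFin.symm (j.succ, τ)).cycleType.sum = τ.cycleType.sum + 1 := by
  set τh := Equiv.Perm.decomposeFin.symm ((0 : Fin (n+1)), τ) with hτh
  set p : Fin (n+1) := j.succ with hp'
  have hp : p ∈ τh.support := by
    rw [mem_support, hτh, hp', hat_apply_succ]
    simpa using hj
  have h0 : (0 : Fin (n+1)) ∉ τh.support := by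
    rw [mem_support, hτh]
    simp [Equiv.Perm.decomposeFin_symm_apply_zero]
  set C := τh.cycleOf p with hC'
  have hCcyc : C.IsCycle := isCycle_cycleOf _ (mem_support.mp hp)
  have hCmem : C ∈ τh.cycleFactorsFinset := cycleOf_mem_cycleFactorsFinset_iff.mpr hp
  set R := τh * C⁻¹ with hR'
  have hdis : Equiv.Perm.Disjoint R C := disjoint_mul_inv_of_mem_cycleFactorsFinset hCmem
  have hRC : τh = R * C := by rw [hR', inv_mul_cancel_right]
  have hsupC_le : C.support ⊆ τh.support := support_cycleOf_le _ _
  have h0C : (0 : Fin (n+1)) ∉ C.support := fun h => h0 (hsupC_le h)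
  have hpC : p ∈ C.support := by
    rw [mem_support, hC', cycleOf_apply_self]
    exact mem_support.mp hp
  obtain ⟨hMcyc, hMsupp⟩ := merge_cycle hCcyc h0C hpC
  have hsuppR_le : R.support ⊆ τh.support := by
    intro x hx
    have := support_mul_le τh C⁻¹ (hR' ▸ hx)
    rcases Finset.mem_union.mp this with h | h
    · exact h
    · exact hsupC_le (by rwa [support_inv] at h)
  have h0R : (0 : Fin (n+1)) ∉ R.support := fun h => h0 (hsuppR_le h)
  have hpR : R p = p := by
    rcases hdis p with h | h
    · exact h
    · exact absurd h (mem_support.mp hpC)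
  have hds : Equiv.Perm.Disjoint (swap (0 : Fin (n+1)) p) R := by
    intro x
    by_cases hx0 : x = 0
    · right; subst hx0; exact notMem_support.mp h0R
    by_cases hxp : x = p
    · right; subst hxp; exact hpR
    · left; exact swap_apply_of_ne_of_ne hx0 hxp
  have hσ : Equiv.Perm.decomposeFin.symm (p, τ) = R * (Equiv.swap 0 p * C) := by
    rw [decomp_eq, ← hτh, hRC, ← mul_assoc, hds.commute.eq, mul_assoc]
  have hdRm : Equiv.Perm.Disjoint R (Equiv.swap 0 p * C) := by
    intro x
    by_cases hx : x ∈ R.support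
    · right
      apply notMem_support.mp
      rw [hMsupp]
      intro hmem
      rcases Finset.mem_insert.mp hmem with h | h
      · exact h0R (h ▸ hx)
      · simpa using (hdis.disjoint_support).le_bot (Finset.mem_inter.mpr ⟨hx, h⟩)
    · left; exact notMem_support.mp hx
  have hct : (Equiv.Perm.decomposeFin.symm (p, τ)).cycleType
      = R.cycleType + {C.support.card + 1} := by
    rw [hσ, hdRm.cycleType_mul, hMcyc.cycleType, hMsupp,
      Finset.card_insert_of_notMem h0C]
  have hctτ : τ.cycleType = R.cycleType + {C.support.card} := by
    rw [← cycleType_hat τ, ← hτh, hRC, hdis.cycleType_mul, hCcyc.cycleType]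
  constructor
  · rw [hct, hctτ]; simp
  · rw [hct, hctτ]; simp; ring


theorem fixCount_add_sum {n : ℕ} (σ : Perm (Fin n)) :
    fixCount σ + σ.cycleType.sum = n := by
  rw [Equiv.Perm.sum_cycleType, fixCount]
  have h := Finset.card_filter_add_card_filter_not
    (s := (Finset.univ : Finset (Fin n))) (p := fun i => σ i = i)
  simpa [Equiv.Perm.support, Finset.filter_not] using h

theorem fixCount_le {n : ℕ} (σ : Perm (Fin n)) : fixCount σ ≤ n :=
  le_of_add_le_left (le_of_eq (fixCount_add_sum σ))

noncomputable def Lw (n : ℕ) (x : ℝ) : ℝ :=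
  ∑ σ : Perm (Fin n), x ^ fixCount σ * ((2:ℝ) ^ Multiset.card σ.cycleType)⁻¹

noncomputable def Fw (n : ℕ) (x : ℝ) : ℝ :=
  ∑ σ : Perm (Fin n),
    (fixCount σ : ℝ) * (x ^ (fixCount σ - 1) * ((2:ℝ) ^ Multiset.card σ.cycleType)⁻¹)

theorem Lw_zero (x : ℝ) : Lw 0 x = 1 := by
  haveI : Subsingleton (Perm (Fin 0)) := ⟨fun a b => by ext i; exact i.elim0⟩
  rw [Lw, Fintype.sum_subsingleton _ 1]
  simp [fixCount, Equiv.Perm.cycleType_one]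

theorem Lw_one (x : ℝ) : Lw 1 x = x := by
  haveI : Subsingleton (Perm (Fin 1)) := ⟨fun a b => by ext i; omega⟩
  rw [Lw, Fintype.sum_subsingleton _ 1]
  simp [fixCount, Equiv.Perm.cycleType_one]

-- fixCount consequences
theorem fix1 {n : ℕ} (τ : Perm (Fin n)) :
    fixCount (Equiv.Perm.decomposeFin.symm ((0 : Fin (n+1)), τ)) = fixCount τ + 1 := by
  have h1 := fixCount_add_sum (Equiv.Perm.decomposeFin.symm ((0 : Fin (n+1)), τ))
  have h2 := fixCount_add_sum τ
  rw [case1] at h1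
  omega

theorem fix2 {n : ℕ} (τ : Perm (Fin n)) (j : Fin n) (hj : τ j = j) :
    fixCount τ = fixCount (Equiv.Perm.decomposeFin.symm (j.succ, τ)) + 1 := by
  have h1 := fixCount_add_sum (Equiv.Perm.decomposeFin.symm (j.succ, τ))
  have h2 := fixCount_add_sum τ
  rw [case2 τ j hj] at h1
  rw [Multiset.sum_cons] at h1
  omega

theorem fix3 {n : ℕ} (τ : Perm (Fin n)) (j : Fin n) (hj : τ j ≠ j) :
    fixCount (Equiv.Perm.decomposeFin.symm (j.succ, τ)) = fixCount τ := by
  have h1 := fixCount_add_sum (Equiv.Perm.decomposeFin.symm (j.succ, τ))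
  have h2 := fixCount_add_sum τ
  have h3 := (case3 τ j hj).2
  omega

theorem card2 {n : ℕ} (τ : Perm (Fin n)) (j : Fin n) (hj : τ j = j) :
    Multiset.card (Equiv.Perm.decomposeFin.symm (j.succ, τ)).cycleType
      = Multiset.card τ.cycleType + 1 := by
  rw [case2 τ j hj]; simp

theorem ptw (f : ℕ) (x : ℝ) : (f:ℝ) * x ^ f = x * ((f:ℝ) * x ^ (f - 1)) := by
  cases f with
  | zero => simp
  | succ m => rw [Nat.succ_sub_one, pow_succ]; ring

theorem count_sum {n : ℕ} (τ : Perm (Fin n)) (a b : ℝ) :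
    (∑ j : Fin n, if τ j = j then a else b)
      = (fixCount τ : ℝ) * a + ((n : ℝ) - (fixCount τ : ℝ)) * b := by
  rw [Finset.sum_ite, Finset.sum_const, Finset.sum_const]
  have h1 : (Finset.univ.filter fun j => τ j = j).card = fixCount τ := rfl
  have h2 : (Finset.univ.filter fun j => ¬ τ j = j).card = n - fixCount τ := by
    have h := Finset.card_filter_add_card_filter_not
      (s := (Finset.univ : Finset (Fin n))) (p := fun j => τ j = j)
    simp only [Finset.card_univ, Fintype.card_fin] at h
    omega
  rw [h1, h2, nsmul_eq_mul, nsmul_eq_mul, Nat.cast_sub (fixCount_le τ)]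

theorem rec1 (n : ℕ) (x : ℝ) :
    Lw (n+1) x = (x + n) * Lw n x + (1/2 - x) * Fw n x := by
  have hsum := Equiv.sum_comp ((Equiv.Perm.decomposeFin (n := n)).symm)
      (fun σ : Perm (Fin (n+1)) =>
        x ^ fixCount σ * ((2:ℝ) ^ Multiset.card σ.cycleType)⁻¹)
  rw [Lw, ← hsum, Fintype.sum_prod_type, Fin.sum_univ_succ]
  have hzero : (∑ τ : Perm (Fin n),
      x ^ fixCount (Equiv.Perm.decomposeFin.symm ((0 : Fin (n+1)), τ))
        * ((2:ℝ) ^ Multiset.card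
            (Equiv.Perm.decomposeFin.symm ((0 : Fin (n+1)), τ)).cycleType)⁻¹)
      = x * Lw n x := by
    rw [Lw, Finset.mul_sum]
    refine Finset.sum_congr rfl fun τ _ => ?_
    rw [fix1, case1, pow_succ]
    ring
  have hsucc : ∀ j : Fin n, ∀ τ : Perm (Fin n),
      x ^ fixCount (Equiv.Perm.decomposeFin.symm (j.succ, τ))
        * ((2:ℝ) ^ Multiset.card
            (Equiv.Perm.decomposeFin.symm (j.succ, τ)).cycleType)⁻¹
      = if τ j = j
        then (1/2) * (x ^ (fixCount τ - 1) * ((2:ℝ) ^ Multiset.card τ.cycleType)⁻¹)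
        else x ^ fixCount τ * ((2:ℝ) ^ Multiset.card τ.cycleType)⁻¹ := by
    intro j τ
    by_cases hj : τ j = j
    · rw [if_pos hj, card2 τ j hj]
      have hf := fix2 τ j hj
      have : fixCount (Equiv.Perm.decomposeFin.symm (j.succ, τ)) = fixCount τ - 1 := by omega
      rw [this, pow_succ]
      ring
    · rw [if_neg hj, fix3 τ j hj, (case3 τ j hj).1]
  calc (∑ τ : Perm (Fin n),
          x ^ fixCount (Equiv.Perm.decomposeFin.symm ((0 : Fin (n+1)), τ))
            * ((2:ℝ) ^ Multiset.card
                (Equiv.Perm.decomposeFin.symm ((0 : Fin (n+1)), τ)).cycleType)⁻¹)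
        + ∑ j : Fin n, ∑ τ : Perm (Fin n),
            x ^ fixCount (Equiv.Perm.decomposeFin.symm (j.succ, τ))
              * ((2:ℝ) ^ Multiset.card
                  (Equiv.Perm.decomposeFin.symm (j.succ, τ)).cycleType)⁻¹
      = x * Lw n x + ∑ τ : Perm (Fin n), ∑ j : Fin n,
          (if τ j = j
            then (1/2) * (x ^ (fixCount τ - 1) * ((2:ℝ) ^ Multiset.card τ.cycleType)⁻¹)
            else x ^ fixCount τ * ((2:ℝ) ^ Multiset.card τ.cycleType)⁻¹) := by
        rw [hzero, Finset.sum_comm]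
        congr 1
        exact Finset.sum_congr rfl fun τ _ => Finset.sum_congr rfl fun j _ => hsucc j τ
    _ = x * Lw n x + ∑ τ : Perm (Fin n),
          ((n : ℝ) * (x ^ fixCount τ * ((2:ℝ) ^ Multiset.card τ.cycleType)⁻¹)
            + (1/2 - x) * ((fixCount τ : ℝ)
                * (x ^ (fixCount τ - 1) * ((2:ℝ) ^ Multiset.card τ.cycleType)⁻¹))) := by
        congr 1
        refine Finset.sum_congr rfl fun τ _ => ?_
        rw [count_sum]
        linear_combination (-(((2:ℝ) ^ Multiset.card τ.cycleType)⁻¹)) * ptw (fixCount τ) x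
    _ = (x + n) * Lw n x + (1/2 - x) * Fw n x := by
        rw [Finset.sum_add_distrib, ← Finset.mul_sum, ← Finset.mul_sum, ← Lw, ← Fw]
        ring

theorem fixCount_conj {m : ℕ} (s τ : Perm (Fin m)) :
    fixCount (s * τ * s⁻¹) = fixCount τ := by
  have h1 := fixCount_add_sum (s * τ * s⁻¹)
  have h2 := fixCount_add_sum τ
  rw [Equiv.Perm.cycleType_conj] at h1
  omega

theorem sum_fix_cond {n : ℕ} (x : ℝ) (i : Fin (n+1)) :
    (∑ τ : Perm (Fin (n+1)), if τ i = i
        then x ^ (fixCount τ - 1) * ((2:ℝ) ^ Multiset.card τ.cycleType)⁻¹ else 0)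
      = ∑ τ : Perm (Fin (n+1)), if τ 0 = 0
        then x ^ (fixCount τ - 1) * ((2:ℝ) ^ Multiset.card τ.cycleType)⁻¹ else 0 := by
  set s : Perm (Fin (n+1)) := swap 0 i with hs
  have hsinv : s⁻¹ = s := by rw [hs, Equiv.swap_inv]
  have hΦ := Equiv.sum_comp ((Equiv.mulRight s).trans (Equiv.mulLeft s))
      (fun τ : Perm (Fin (n+1)) => if τ 0 = 0
        then x ^ (fixCount τ - 1) * ((2:ℝ) ^ Multiset.card τ.cycleType)⁻¹ else 0)
  rw [← hΦ]
  refine Finset.sum_congr rfl fun τ _ => ?_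
  have happ : ((Equiv.mulRight s).trans (Equiv.mulLeft s)) τ = s * τ * s⁻¹ := by
    rw [hsinv]; rfl
  have hcond : (s * τ * s⁻¹) 0 = 0 ↔ τ i = i := by
    rw [hsinv]
    have h1 : (s * τ * s) 0 = s (τ i) := by
      simp [hs, Equiv.Perm.mul_apply, swap_apply_left]
    rw [h1, show (0 : Fin (n+1)) = s i by simp [hs, swap_apply_right],
      Equiv.apply_eq_iff_eq]
  rw [happ]
  simp only [hcond, fixCount_conj, Equiv.Perm.cycleType_conj]

theorem rec2 (n : ℕ) (x : ℝ) : Fw (n+1) x = ((n:ℝ)+1) * Lw n x := by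
  have step1 : Fw (n+1) x = ∑ τ : Perm (Fin (n+1)), ∑ i : Fin (n+1),
      (if τ i = i
        then x ^ (fixCount τ - 1) * ((2:ℝ) ^ Multiset.card τ.cycleType)⁻¹ else 0) := by
    rw [Fw]
    refine Finset.sum_congr rfl fun τ _ => ?_
    rw [count_sum τ _ 0]
    ring
  have step2 : ∀ i : Fin (n+1), (∑ τ : Perm (Fin (n+1)), if τ i = i
      then x ^ (fixCount τ - 1) * ((2:ℝ) ^ Multiset.card τ.cycleType)⁻¹ else 0)
      = Lw n x := by
    intro i
    rw [sum_fix_cond x i]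
    have hsum := Equiv.sum_comp ((Equiv.Perm.decomposeFin (n := n)).symm)
      (fun τ : Perm (Fin (n+1)) => if τ 0 = 0
        then x ^ (fixCount τ - 1) * ((2:ℝ) ^ Multiset.card τ.cycleType)⁻¹ else 0)
    rw [← hsum, Fintype.sum_prod_type, Fin.sum_univ_succ]
    have h0 : (∑ ρ : Perm (Fin n),
        if (Equiv.Perm.decomposeFin.symm ((0 : Fin (n+1)), ρ)) 0 = 0
        then x ^ (fixCount (Equiv.Perm.decomposeFin.symm ((0 : Fin (n+1)), ρ)) - 1)
          * ((2:ℝ) ^ Multiset.card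
              (Equiv.Perm.decomposeFin.symm ((0 : Fin (n+1)), ρ)).cycleType)⁻¹ else 0)
        = Lw n x := by
      rw [Lw]
      refine Finset.sum_congr rfl fun ρ _ => ?_
      rw [if_pos (Equiv.Perm.decomposeFin_symm_apply_zero _ _), fix1, case1,
        Nat.add_sub_cancel]
    have h1 : ∀ j : Fin n, (∑ ρ : Perm (Fin n),
        if (Equiv.Perm.decomposeFin.symm (j.succ, ρ)) 0 = 0
        then x ^ (fixCount (Equiv.Perm.decomposeFin.symm (j.succ, ρ)) - 1)
          * ((2:ℝ) ^ Multiset.card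
              (Equiv.Perm.decomposeFin.symm (j.succ, ρ)).cycleType)⁻¹ else 0) = 0 := by
      intro j
      refine Finset.sum_eq_zero fun ρ _ => ?_
      rw [if_neg]
      rw [Equiv.Perm.decomposeFin_symm_apply_zero]
      exact Fin.succ_ne_zero j
    rw [h0]
    rw [Finset.sum_congr rfl (fun j _ => h1 j), Finset.sum_const, smul_zero, add_zero]
  rw [step1, Finset.sum_comm, Finset.sum_congr rfl (fun i _ => step2 i),
    Finset.sum_const, Finset.card_univ, Fintype.card_fin, nsmul_eq_mul]
  push_cast
  ring

noncomputable def cb (k : ℕ) : ℝ :=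
  (Nat.factorial (2*k) : ℝ) / ((4:ℝ)^k * (Nat.factorial k : ℝ)^2)

noncomputable def Sw (n : ℕ) (y : ℝ) : ℝ :=
  ∑ ℓ ∈ Finset.range (n+1), y^ℓ / (Nat.factorial ℓ : ℝ) * cb (n - ℓ)

noncomputable def Rw (n : ℕ) (x : ℝ) : ℝ := (Nat.factorial n : ℝ) * Sw n (x - 1/2)

theorem cb_succ (k : ℕ) : ((k:ℝ)+1) * cb (k+1) = ((k:ℝ) + 1/2) * cb k := by
  have h1 : 2*(k+1) = (2*k+1) + 1 := by ring
  rw [cb, cb, h1, Nat.factorial_succ, Nat.factorial_succ, Nat.factorial_succ, pow_succ]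
  have h4 : ((4:ℝ)^k) ≠ 0 := by positivity
  have h5 : (Nat.factorial k : ℝ) ≠ 0 := Nat.cast_ne_zero.mpr (Nat.factorial_ne_zero k)
  field_simp
  push_cast
  ring

theorem shift_sum (M : ℕ) (y : ℝ) :
    (∑ ℓ ∈ Finset.range (M+2), (ℓ:ℝ) * (y^ℓ / (Nat.factorial ℓ : ℝ) * cb (M+1-ℓ)))
      = y * Sw M y := by
  rw [Finset.sum_range_succ']
  have h0 : ((0:ℕ):ℝ) * (y^0 / (Nat.factorial 0 : ℝ) * cb (M+1-0)) = 0 := by simp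
  rw [h0, add_zero, Sw, Finset.mul_sum]
  refine Finset.sum_congr rfl fun i _ => ?_
  have h1 : M + 1 - (i+1) = M - i := by omega
  rw [h1, Nat.factorial_succ]
  have h5 : (Nat.factorial i : ℝ) ≠ 0 := Nat.cast_ne_zero.mpr (Nat.factorial_ne_zero i)
  have h6 : ((i:ℝ)+1) ≠ 0 := by positivity
  push_cast
  field_simp
  ring

theorem Srec (n : ℕ) (y : ℝ) :
    ((n:ℝ)+2) * Sw (n+2) y
      = (((n:ℝ)+1) + 1/2 + y) * Sw (n+1) y - y * Sw n y := by
  have expand : ((n:ℝ)+2) * Sw (n+2) y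
      = (∑ ℓ ∈ Finset.range (n+3),
          ((n+2-ℓ : ℕ):ℝ) * (y^ℓ / (Nat.factorial ℓ : ℝ) * cb (n+2-ℓ)))
        + ∑ ℓ ∈ Finset.range (n+3),
            (ℓ:ℝ) * (y^ℓ / (Nat.factorial ℓ : ℝ) * cb (n+2-ℓ)) := by
    rw [Sw, Finset.mul_sum, ← Finset.sum_add_distrib]
    refine Finset.sum_congr rfl fun ℓ hℓ => ?_
    have hle : ℓ ≤ n+2 := by
      have := Finset.mem_range.mp hℓ; omega
    have : ((n+2-ℓ : ℕ):ℝ) = ((n:ℝ)+2) - (ℓ:ℝ) := by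
      push_cast [Nat.cast_sub hle]; ring
    rw [this]
    ring
  have partB : (∑ ℓ ∈ Finset.range (n+3),
      (ℓ:ℝ) * (y^ℓ / (Nat.factorial ℓ : ℝ) * cb (n+2-ℓ)))
      = y * Sw (n+1) y := by
    have := shift_sum (n+1) y
    convert this using 3
  have partA : (∑ ℓ ∈ Finset.range (n+3),
      ((n+2-ℓ : ℕ):ℝ) * (y^ℓ / (Nat.factorial ℓ : ℝ) * cb (n+2-ℓ)))
      = (((n:ℝ)+1) + 1/2) * Sw (n+1) y - y * Sw n y := by
    rw [Finset.sum_range_succ]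
    have hlast : ((n+2-(n+2) : ℕ):ℝ)
        * (y^(n+2) / (Nat.factorial (n+2) : ℝ) * cb (n+2-(n+2))) = 0 := by
      simp
    rw [hlast, add_zero]
    have step : ∀ ℓ ∈ Finset.range (n+2),
        ((n+2-ℓ : ℕ):ℝ) * (y^ℓ / (Nat.factorial ℓ : ℝ) * cb (n+2-ℓ))
          = (((n:ℝ)+1) + 1/2) * (y^ℓ / (Nat.factorial ℓ : ℝ) * cb (n+1-ℓ))
            - (ℓ:ℝ) * (y^ℓ / (Nat.factorial ℓ : ℝ) * cb (n+1-ℓ)) := by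
      intro ℓ hℓ
      have hle : ℓ ≤ n+1 := by have := Finset.mem_range.mp hℓ; omega
      have h1 : n+2-ℓ = (n+1-ℓ) + 1 := by omega
      have h2 : ((n+2-ℓ : ℕ):ℝ) = ((n+1-ℓ : ℕ):ℝ) + 1 := by rw [h1]; push_cast; ring
      have h3 := cb_succ (n+1-ℓ)
      have h4 : ((n+1-ℓ : ℕ):ℝ) = ((n:ℝ)+1) - (ℓ:ℝ) := by
        push_cast [Nat.cast_sub hle]; ring
      rw [h2, h1]
      calc (((n+1-ℓ : ℕ):ℝ) + 1) * (y^ℓ / (Nat.factorial ℓ : ℝ) * cb ((n+1-ℓ) + 1))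
          = (y^ℓ / (Nat.factorial ℓ : ℝ))
              * ((((n+1-ℓ : ℕ):ℝ) + 1) * cb ((n+1-ℓ) + 1)) := by ring
        _ = (y^ℓ / (Nat.factorial ℓ : ℝ)) * ((((n+1-ℓ : ℕ):ℝ) + 1/2) * cb (n+1-ℓ)) := by
              rw [h3]
        _ = _ := by rw [h4]; ring
    rw [Finset.sum_congr rfl step, Finset.sum_sub_distrib]
    have hSw : (∑ ℓ ∈ Finset.range (n+2),
        (((n:ℝ)+1) + 1/2) * (y^ℓ / (Nat.factorial ℓ : ℝ) * cb (n+1-ℓ)))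
        = (((n:ℝ)+1) + 1/2) * Sw (n+1) y := by
      rw [Sw, Finset.mul_sum]
    rw [hSw, shift_sum n y]
  rw [expand, partA, partB]
  ring

theorem Rw_zero (x : ℝ) : Rw 0 x = 1 := by
  rw [Rw, Sw]
  simp [cb, Nat.factorial]

theorem Rw_one (x : ℝ) : Rw 1 x = x := by
  rw [Rw, Sw, Finset.sum_range_succ, Finset.sum_range_succ, Finset.sum_range_zero]
  norm_num [cb, Nat.factorial]

theorem LReq : ∀ (n : ℕ) (x : ℝ), Lw n x = Rw n x := by
  have key : ∀ n : ℕ, (∀ x, Lw n x = Rw n x) ∧ (∀ x, Lw (n+1) x = Rw (n+1) x) := by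
    intro n
    induction n with
    | zero =>
      exact ⟨fun x => by rw [Lw_zero, Rw_zero], fun x => by rw [Lw_one, Rw_one]⟩
    | succ m ih =>
      refine ⟨ih.2, fun x => ?_⟩
      rw [rec1 (m+1) x, rec2 m x, ih.1, ih.2]
      have h1 : (Nat.factorial (m+2):ℝ) = ((m:ℝ)+2) * (Nat.factorial (m+1):ℝ) := by
        rw [Nat.factorial_succ]; push_cast; ring
      have h2 : (Nat.factorial (m+1):ℝ) = ((m:ℝ)+1) * (Nat.factorial m:ℝ) := by
        rw [Nat.factorial_succ]; push_cast; ring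
      rw [Rw, Rw, Rw, h1, h2]
      simp only [show m+1+1 = m+2 from rfl]
      push_cast
      linear_combination (-((m:ℝ)+1)) * (Nat.factorial m : ℝ) * Srec m (x - 1/2)
  exact fun n => (key n).1

/-- for `n ≥ 1`, `μ₂ : ℝ` and `ν > 0`:
`Σ_{σ ∈ S_n} μ₂^{fix(σ)} · ν^{n−fix(σ)} · 2^{-c(σ)}
  = n! · ν^n · Σ_{ℓ=0}^{n} ((μ₂/ν − 1/2)^ℓ / ℓ!) · (2(n−ℓ))! / (4^{n−ℓ} · ((n−ℓ)!)²)`,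
where `c(σ)` is the number of cycles of `σ` of length greater than one. -/
theorem sum_fix_weight_cycle_eq (n : ℕ) (hn : 1 ≤ n) (μ₂ ν : ℝ) (hν : 0 < ν) :
    ∑ σ : Equiv.Perm (Fin n),
        μ₂ ^ fixCount σ * ν ^ (n - fixCount σ) * ((2 : ℝ) ^ σ.cycleType.card)⁻¹
      = (Nat.factorial n : ℝ) * ν ^ n *
          ∑ ℓ ∈ Finset.range (n + 1),
            ((μ₂ / ν - 1 / 2) ^ ℓ / (Nat.factorial ℓ : ℝ)) *
              ((Nat.factorial (2 * (n - ℓ)) : ℝ) /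
                ((4 : ℝ) ^ (n - ℓ) * (Nat.factorial (n - ℓ) : ℝ) ^ 2)) := by
  have hν0 : ν ≠ 0 := ne_of_gt hν
  have hL : (∑ σ : Equiv.Perm (Fin n),
      μ₂ ^ fixCount σ * ν ^ (n - fixCount σ) * ((2 : ℝ) ^ σ.cycleType.card)⁻¹)
      = ν ^ n * Lw n (μ₂ / ν) := by
    rw [Lw, Finset.mul_sum]
    refine Finset.sum_congr rfl fun σ _ => ?_
    rw [div_pow, pow_sub₀ ν hν0 (fixCount_le σ)]
    field_simp
  rw [hL, LReq n (μ₂ / ν), Rw, Sw, Finset.mul_sum, Finset.mul_sum, Finset.mul_sum]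
  refine Finset.sum_congr rfl fun ℓ _ => ?_
  rw [cb]
  ring
end

section
/- Let n ≥ 1 and let (a_{ij})_{i,j ∈ [n]} be a family of n² jointly independent real-valued random variables on a probability space, each nonnegative, square-integrable, with E[a_{ij}] = μ₁ and E[a_{ij}²] = μ₂ for all i,j. Let A be the random n×n matrix with entries a_{ij}. Then E[perm(A)²] = n! · Σ_{σ ∈ S_n} μ₂^{fix(σ)} · (μ₁²)^{n − fix(σ)}. -/
open scoped BigOperators
open MeasureTheory ProbabilityTheory

/-- The permanent of a square real matrix: `perm B = Σ_σ ∏_i B(i, σ(i))`. -/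
noncomputable def matPerm {ι : Type*} [Fintype ι] [DecidableEq ι] (B : Matrix ι ι ℝ) : ℝ :=
  ∑ σ : Equiv.Perm ι, ∏ i, B i (σ i)

lemma integral_prod_of_iIndep' {ι Ω : Type*} [MeasurableSpace Ω] {μ : Measure Ω}
    [IsProbabilityMeasure μ] (f : ι → Ω → ℝ)
    (hindep : iIndepFun f μ)
    (hmeas : ∀ i, Measurable (f i)) (hint : ∀ i, Integrable (f i) μ)
    (s : Finset ι) :
    Integrable (fun ω => ∏ i ∈ s, f i ω) μ ∧
      (∫ ω, ∏ i ∈ s, f i ω ∂μ) = ∏ i ∈ s, ∫ ω, f i ω ∂μ := by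
  classical
  induction s using Finset.induction_on with
  | empty => exact ⟨by simpa using integrable_const (1 : ℝ), by simp⟩
  | @insert i s hi ih =>
    have hIF : IndepFun (f i) (fun ω => ∏ j ∈ s, f j ω) μ := by
      have := (hindep.indepFun_finsetProd_of_notMem hmeas hi).symm
      simpa [Finset.prod_fn] using this
    have h1 : Integrable (fun ω => f i ω * ∏ j ∈ s, f j ω) μ :=
      hIF.integrable_mul (hint i) ih.1
    refine ⟨by simpa [Finset.prod_insert hi] using h1, ?_⟩
    simp only [Finset.prod_insert hi]
    have := hIF.integral_mul_eq_mul_integral (hint i).aestronglyMeasurable ih.1.aestronglyMeasurable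
    simpa [ih.2, Pi.mul_apply] using this

lemma key_pair {Ω : Type*} [MeasurableSpace Ω] (μ : Measure Ω)
    [IsProbabilityMeasure μ] (n : ℕ)
    (a : Fin n → Fin n → Ω → ℝ) (μ₁ μ₂ : ℝ)
    (hmeas : ∀ i j, Measurable (a i j))
    (hL2 : ∀ i j, MemLp (a i j) 2 μ)
    (hindep : iIndepFun
      (fun p : Fin n × Fin n => a p.1 p.2) μ)
    (hmean : ∀ i j, ∫ ω, a i j ω ∂μ = μ₁)
    (hsecond : ∀ i j, ∫ ω, (a i j ω) ^ 2 ∂μ = μ₂)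
    (σ τ : Equiv.Perm (Fin n)) :
    Integrable (fun ω => (∏ i, a i (σ i) ω) * ∏ i, a i (τ i) ω) μ ∧
      (∫ ω, (∏ i, a i (σ i) ω) * ∏ i, a i (τ i) ω ∂μ)
        = μ₂ ^ fixCount (τ⁻¹ * σ) * (μ₁ ^ 2) ^ (n - fixCount (τ⁻¹ * σ)) := by
  classical
  set m : Fin n × Fin n → ℕ :=
    fun p => (if p.2 = σ p.1 then 1 else 0) + (if p.2 = τ p.1 then 1 else 0) with hm
  set Y : Fin n × Fin n → Ω → ℝ := fun p ω => a p.1 p.2 ω ^ m p with hY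
  have hYmeas : ∀ p, Measurable (Y p) := fun p => (hmeas p.1 p.2).pow_const _
  have hYindep : iIndepFun Y μ :=
    hindep.comp (fun p x => x ^ m p) (fun p => measurable_id.pow_const _)
  have hmcases : ∀ p, m p = 0 ∨ m p = 1 ∨ m p = 2 := by
    intro p; simp only [hm]; split_ifs <;> simp
  have hYint : ∀ p, Integrable (Y p) μ := by
    intro p
    rcases hmcases p with h | h | h <;> simp only [hY, h]
    · simpa using integrable_const (1 : ℝ)
    · simpa using (hL2 p.1 p.2).integrable one_le_two
    · exact (hL2 p.1 p.2).integrable_sq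
  set pw : ℕ → ℝ := fun k => if k = 2 then μ₂ else if k = 1 then μ₁ else 1 with hpw
  have hYval : ∀ p, (∫ ω, Y p ω ∂μ) = pw (m p) := by
    intro p
    rcases hmcases p with h | h | h <;> simp only [hY, h, hpw] <;> simp
    · exact hmean p.1 p.2
    · exact hsecond p.1 p.2
  have hpoint : ∀ ω, (∏ i, a i (σ i) ω) * ∏ i, a i (τ i) ω = ∏ p, Y p ω := by
    intro ω
    simp only [hY, hm, pow_add, Finset.prod_mul_distrib]
    congr 1 <;>
    · rw [Fintype.prod_prod_type]
      refine (Finset.prod_congr rfl fun i _ => ?_).symm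
      simp [pow_ite, Finset.prod_ite_eq']
  have hmain := integral_prod_of_iIndep' Y hYindep hYmeas hYint Finset.univ
  have hfix : fixCount (τ⁻¹ * σ) = (Finset.univ.filter fun i => σ i = τ i).card := by
    unfold fixCount
    congr 1
    ext i
    simp [Equiv.Perm.mul_apply, Equiv.Perm.inv_eq_iff_eq, Equiv.symm_apply_eq]
  have hprodval : (∏ p, pw (m p))
      = μ₂ ^ fixCount (τ⁻¹ * σ) * (μ₁ ^ 2) ^ (n - fixCount (τ⁻¹ * σ)) := by
    rw [Fintype.prod_prod_type]
    have hinner : ∀ i, (∏ j, pw (m (i, j))) = if σ i = τ i then μ₂ else μ₁ ^ 2 := by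
      intro i
      by_cases h : σ i = τ i
      · have hptw : ∀ j, pw (m (i, j)) = if j = σ i then μ₂ else 1 := by
          intro j
          by_cases hj : j = σ i
          · have hj' : j = τ i := hj.trans h
            simp [hm, hpw, hj, hj', h]
          · have hj' : ¬ j = τ i := fun hc => hj (hc.trans h.symm)
            simp [hm, hpw, hj, hj']
        rw [Finset.prod_congr rfl fun j _ => hptw j, Finset.prod_ite_eq']
        simp [h]
      · have hptw : ∀ j, pw (m (i, j))
            = (if j = σ i then μ₁ else 1) * (if j = τ i then μ₁ else 1) := by
          intro j
          have h' : ¬ τ i = σ i := fun hc => h hc.symm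
          by_cases hj : j = σ i <;> by_cases hj' : j = τ i
          · exact absurd (hj.symm.trans hj') h
          · simp [hm, hpw, hj, hj', h]
          · simp [hm, hpw, hj, hj', h']
          · simp [hm, hpw, hj, hj']
        rw [Finset.prod_congr rfl fun j _ => hptw j, Finset.prod_mul_distrib,
          Finset.prod_ite_eq', Finset.prod_ite_eq']
        simp [h, sq]
    rw [Finset.prod_congr rfl fun i _ => hinner i]
    rw [Finset.prod_ite, Finset.prod_const, Finset.prod_const, hfix]
    congr 2
    have := Finset.card_filter_add_card_filter_not
      (s := (Finset.univ : Finset (Fin n))) (p := fun i => σ i = τ i)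
    simp only [Finset.card_univ, Fintype.card_fin] at this
    omega
  constructor
  · have := hmain.1
    refine this.congr ?_
    exact Filter.Eventually.of_forall fun ω => (hpoint ω).symm
  · calc (∫ ω, (∏ i, a i (σ i) ω) * ∏ i, a i (τ i) ω ∂μ)
        = ∫ ω, ∏ p, Y p ω ∂μ := by simp_rw [hpoint]
      _ = ∏ p, ∫ ω, Y p ω ∂μ := hmain.2
      _ = ∏ p, pw (m p) := Finset.prod_congr rfl fun p _ => hYval p
      _ = _ := hprodval


set_option maxHeartbeats 1000000 in
/-- if the `n²` entries `a i j` of a random `n×n` matrix `A` are jointly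
independent, nonnegative, square-integrable, with `E[a i j] = μ₁` and `E[(a i j)²] = μ₂`,
then `E[perm(A)²] = n! · Σ_{σ ∈ S_n} μ₂^{fix(σ)} · (μ₁²)^{n−fix(σ)}`. -/
theorem expectation_perm_sq {Ω : Type*} [MeasurableSpace Ω] (μ : Measure Ω)
    [IsProbabilityMeasure μ] (n : ℕ) (hn : 1 ≤ n)
    (a : Fin n → Fin n → Ω → ℝ) (μ₁ μ₂ : ℝ)
    (hmeas : ∀ i j, Measurable (a i j))
    (hnonneg : ∀ i j ω, 0 ≤ a i j ω)
    (hL2 : ∀ i j, MemLp (a i j) 2 μ)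
    (hindep : iIndepFun
      (fun p : Fin n × Fin n => a p.1 p.2) μ)
    (hmean : ∀ i j, ∫ ω, a i j ω ∂μ = μ₁)
    (hsecond : ∀ i j, ∫ ω, (a i j ω) ^ 2 ∂μ = μ₂) :
    ∫ ω, (matPerm (fun i j => a i j ω)) ^ 2 ∂μ
      = (Nat.factorial n : ℝ) *
          ∑ σ : Equiv.Perm (Fin n), μ₂ ^ fixCount σ * (μ₁ ^ 2) ^ (n - fixCount σ) := by
  classical
  have key := key_pair μ n a μ₁ μ₂ hmeas hL2 hindep hmean hsecond
  have hperm : (fun ω => (matPerm fun i j => a i j ω) ^ 2)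
      = fun ω => ∑ σ : Equiv.Perm (Fin n), ∑ τ : Equiv.Perm (Fin n),
          (∏ i, a i (σ i) ω) * ∏ i, a i (τ i) ω := by
    funext ω
    unfold matPerm
    rw [sq, Finset.sum_mul_sum]
  have h1 : ∫ ω, (matPerm fun i j => a i j ω) ^ 2 ∂μ
      = ∑ σ : Equiv.Perm (Fin n), ∑ τ : Equiv.Perm (Fin n),
          ∫ ω, (∏ i, a i (σ i) ω) * ∏ i, a i (τ i) ω ∂μ := by
    rw [show (∫ ω, (matPerm fun i j => a i j ω) ^ 2 ∂μ)
        = ∫ ω, ∑ σ : Equiv.Perm (Fin n), ∑ τ : Equiv.Perm (Fin n),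
            (∏ i, a i (σ i) ω) * ∏ i, a i (τ i) ω ∂μ from by rw [← hperm]]
    rw [integral_finset_sum _ fun σ _ => integrable_finset_sum _ fun τ _ => (key σ τ).1]
    exact Finset.sum_congr rfl fun σ _ => integral_finset_sum _ fun τ _ => (key σ τ).1
  rw [h1]
  set g : Equiv.Perm (Fin n) → ℝ :=
    fun π => μ₂ ^ fixCount π * (μ₁ ^ 2) ^ (n - fixCount π) with hg
  calc (∑ σ : Equiv.Perm (Fin n), ∑ τ : Equiv.Perm (Fin n),
          ∫ ω, (∏ i, a i (σ i) ω) * ∏ i, a i (τ i) ω ∂μ)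
      = ∑ σ : Equiv.Perm (Fin n), ∑ τ : Equiv.Perm (Fin n), g (τ⁻¹ * σ) :=
        Finset.sum_congr rfl fun σ _ => Finset.sum_congr rfl fun τ _ => (key σ τ).2
    _ = ∑ τ : Equiv.Perm (Fin n), ∑ σ : Equiv.Perm (Fin n), g (τ⁻¹ * σ) :=
        Finset.sum_comm
    _ = ∑ _τ : Equiv.Perm (Fin n), ∑ σ : Equiv.Perm (Fin n), g σ := by
        refine Finset.sum_congr rfl fun τ _ => ?_
        simpa using Equiv.sum_comp (Equiv.mulLeft τ⁻¹) g
    _ = (Nat.factorial n : ℝ) * ∑ σ : Equiv.Perm (Fin n), g σ := by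
        rw [Finset.sum_const, Finset.card_univ, Fintype.card_perm, Fintype.card_fin,
          nsmul_eq_mul]
    _ = _ := rfl
end
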